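/- Let K be a convex body in ℝ^m, let S be a linear subspace of ℝ^m of dimension d, and let θ₁, θ₂ be unit vectors orthogonal to S with θ₁ + θ₂ ≠ 0; set θ₃ = (θ₁+θ₂)/|θ₁+θ₂|₂. For i = 1,2,3 and r > 0 let h_i(r) = |K ∩ (S + rθ_i)|, the d-dimensional volume of the slice. Then for all r₁, r₂ > 0, with t = r₁/(r₁+r₂) and r₃ = |θ₁+θ₂|₂ / (1/r₁ + 1/r₂), one has h₃(r₃) ≥ h₁(r₁)^{1−t} · h₂(r₂)^{t}. -/

import Mathlib

open MeasureTheory Metric Real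
open scoped Pointwise ENNReal NNReal

noncomputable section

/-- `ℂⁿ`, identified with `ℝ^{2n}` as a real inner product space. -/
abbrev Cn (n : ℕ) := EuclideanSpace ℂ (Fin n)

instance (n : ℕ) : MeasurableSpace (Cn n) := borel _
instance (n : ℕ) : BorelSpace (Cn n) := ⟨rfl⟩
/-- Lebesgue measure on `ℝ^{2n}`, realized as `2n`-dimensional Hausdorff measure. -/
instance (n : ℕ) : MeasureSpace (Cn n) := ⟨μH[2*n]⟩

variable {n : ℕ}

/-- The complex hyperplane through the origin perpendicular to `ξ`. -/
def Hyp (ξ : Cn n) : Set (Cn n) := {z | (inner ℂ ξ z : ℂ) = 0}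

/-- The real inner product on `ℂⁿ ≅ ℝ^{2n}`. -/
def rinner (x y : Cn n) : ℝ := (inner ℂ x y : ℂ).re

/-- An origin symmetric complex star body in `ℝ^{2n}`:  a compact set, star-shaped with
respect to the origin (an interior point), with continuous Minkowski functional (gauge),
origin symmetric and invariant under the rotations `R_θ` (multiplication by unit complex
scalars). -/
structure IsComplexStarBody (K : Set (Cn n)) : Prop where
  compact : IsCompact K
  zero_mem : (0 : Cn n) ∈ interior K
  radial : ∀ x : Cn n, x ∈ K ↔ gauge K x ≤ 1
  cont : Continuous (gauge K)
  symm : ∀ x : Cn n, x ∈ K ↔ -x ∈ K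
  rot : ∀ c : ℂ, ‖c‖ = 1 → ∀ x : Cn n, gauge K (c • x) = gauge K x

/-- An origin symmetric complex convex body in `ℝ^{2n}`. -/
structure IsComplexConvexBody (K : Set (Cn n)) : Prop where
  compact : IsCompact K
  conv : Convex ℝ K
  zero_mem : (0 : Cn n) ∈ interior K
  symm : ∀ x : Cn n, x ∈ K ↔ -x ∈ K
  rot : ∀ c : ℂ, ‖c‖ = 1 → c • K = K

/-- The complex spherical Radon transform:  integration over `S^{2n-1} ∩ H_ξ` with respect
to the `(2n-3)`-dimensional Hausdorff measure. -/
def RadonC (f : Cn n → ℝ) (ξ : Cn n) : ℝ :=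
  ∫ x in sphere (0 : Cn n) 1 ∩ Hyp ξ, f x ∂μH[2*(n:ℝ)-3]

/-- The Fourier transform `φ̂(ξ) = ∫ φ(x) e^{−i(x,ξ)} dx`. -/
def FT (φ : Cn n → ℂ) (ξ : Cn n) : ℂ :=
  ∫ x : Cn n, Complex.exp (-Complex.I * ((rinner x ξ : ℝ) : ℂ)) * φ x

/-- A complex intersection body:  an origin symmetric complex star body `K` such that
`‖·‖_K^{-2} = R_c μ` for some finite rotation-invariant Borel measure `μ` on `S^{2n-1}`. -/
def IsComplexIntersectionBody (K : Set (Cn n)) : Prop :=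
  IsComplexStarBody K ∧
  ∃ μ : Measure (Cn n), IsFiniteMeasure μ ∧ μ ((sphere (0 : Cn n) 1)ᶜ) = 0 ∧
    (∀ c : ℂ, ‖c‖ = 1 → Measure.map (fun x => c • x) μ = μ) ∧
    ∀ f : Cn n → ℝ, ContinuousOn f (sphere (0 : Cn n) 1) →
      (∀ c : ℂ, ‖c‖ = 1 → ∀ x ∈ sphere (0 : Cn n) 1, f (c • x) = f x) →
      (∫ x in sphere (0 : Cn n) 1, gauge K x ^ (-2 : ℝ) * f x ∂μH[2*(n:ℝ)-1])
        = ∫ ξ, RadonC f ξ ∂μ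

/-- A complex ellipsoid:  a linear image of the Euclidean unit ball invariant under the
rotations `R_θ`. -/
def IsComplexEllipsoid (E : Set (Cn n)) : Prop :=
  (∃ T : Cn n ≃ₗ[ℝ] Cn n, E = T '' closedBall (0 : Cn n) 1) ∧
  ∀ c : ℂ, ‖c‖ = 1 → c • E = E

/-- The norm of the complex ellipsoid `E_{a,b}(ξ)`;  here `ξ^⊥ = iξ`. -/
def normE (a b : ℝ) (ξ x : Cn n) : ℝ :=
  Real.sqrt ((rinner x ξ ^ 2 + rinner x (Complex.I • ξ) ^ 2) / a ^ 2
    + (‖x‖ ^ 2 - rinner x ξ ^ 2 - rinner x (Complex.I • ξ) ^ 2) / b ^ 2)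

/-- The volume of the unit Euclidean ball `B_2^m` in `ℝ^m`. -/
def ballVol (m : ℕ) : ℝ := (volume (closedBall (0 : EuclideanSpace ℝ (Fin m)) 1)).toReal

/-- The constant `d_n = |B_2^{2n}|^{(n-1)/n} / |B_2^{2n-2}|`. -/
def dconst (n : ℕ) : ℝ := ballVol (2*n) ^ (((n:ℝ) - 1)/(n:ℝ)) / ballVol (2*n - 2)

/-- The complex intersection body `I_c(K)` of `K`, i.e. the star body whose radial function
is `ρ(ξ) = (|K ∩ H_ξ|/π)^{1/2}`. -/
def Ic (K : Set (Cn n)) : Set (Cn n) :=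
  {0} ∪ {x : Cn n | x ≠ 0 ∧ π * ‖x‖ ^ 2 ≤ (μH[2*(n:ℝ)-2] (K ∩ Hyp (‖x‖⁻¹ • x))).toReal}

/-!
Translating a slice `K ∩ (v + S)` back into `S` turns its `d`-dimensional Hausdorff measure into
the measure of the compact set `{s ∈ S | v + s ∈ K}` under a Haar measure of `S`. As
`r₃ θ₃ = (1 - t) r₁ θ₁ + t r₂ θ₂`, convexity of `K` gives `(1 - t) • X₁ + t • X₂ ⊆ X₃` for these
sets, and the multiplicative Brunn–Minkowski inequality `|X₁|^(1-t) |X₂|^t ≤ |(1-t) • X₁ + t • X₂|`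
concludes. That inequality holds for all compact sets and is proved by induction on the
dimension: the volume of a compact set in `ℝ × E` is the integral of the volumes of its slices,
and the one-dimensional Prékopa–Leindler inequality (from the one-dimensional Brunn–Minkowski
inequality and the layer-cake formula) carries the inequality from `E` to `ℝ × E`.
-/

open Set Module

namespace ENNReal

lemma rpow_one_sub_mul_rpow_self (x : ℝ≥0∞) {t : ℝ} (ht0 : 0 ≤ t) (ht1 : t ≤ 1) :
    x ^ (1 - t) * x ^ t = x := by
  rw [← ENNReal.rpow_add_of_nonneg _ _ (sub_nonneg.2 ht1) ht0, sub_add_cancel, ENNReal.rpow_one]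

lemma mul_rpow_one_sub_mul_mul_rpow (a b x y : ℝ≥0∞) {t : ℝ} (ht0 : 0 ≤ t) (ht1 : t ≤ 1) :
    (a * x) ^ (1 - t) * (b * y) ^ t = a ^ (1 - t) * b ^ t * (x ^ (1 - t) * y ^ t) := by
  rw [ENNReal.mul_rpow_of_nonneg _ _ (sub_nonneg.2 ht1), ENNReal.mul_rpow_of_nonneg _ _ ht0]
  ring

lemma geom_mean_le_arith_mean2_weighted {t : ℝ} (ht0 : 0 < t) (ht1 : t < 1) (x y : ℝ≥0∞) :
    x ^ (1 - t) * y ^ t ≤ ENNReal.ofReal (1 - t) * x + ENNReal.ofReal t * y := by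
  have ht1' : 0 < 1 - t := sub_pos.2 ht1
  rcases eq_or_ne x ∞ with rfl | hx
  · rw [ENNReal.mul_top (by simpa using ht1'), top_add]
    exact le_top
  rcases eq_or_ne y ∞ with rfl | hy
  · rw [ENNReal.mul_top (by simpa using ht0), add_top]
    exact le_top
  lift x to ℝ≥0 using hx
  lift y to ℝ≥0 using hy
  have := Real.geom_mean_le_arith_mean2_weighted ht1'.le ht0.le x.coe_nonneg y.coe_nonneg
    (sub_add_cancel 1 t)
  rw [← ENNReal.ofReal_coe_nnreal (p := x), ← ENNReal.ofReal_coe_nnreal (p := y),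
    ENNReal.ofReal_rpow_of_nonneg x.coe_nonneg ht1'.le,
    ENNReal.ofReal_rpow_of_nonneg y.coe_nonneg ht0.le,
    ← ENNReal.ofReal_mul (by positivity), ← ENNReal.ofReal_mul ht1'.le,
    ← ENNReal.ofReal_mul ht0.le, ← ENNReal.ofReal_add (by positivity) (by positivity)]
  exact ENNReal.ofReal_le_ofReal this

end ENNReal

namespace Real

lemma volume_smul_of_pos {c : ℝ} (hc : 0 < c) (s : Set ℝ) :
    volume (c • s) = ENNReal.ofReal c * volume s := by
  rw [Measure.addHaar_smul, Module.finrank_self, pow_one, abs_of_pos hc]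

lemma volume_add_volume_le_volume_add {A B : Set ℝ} (hA : IsCompact A) (hB : IsCompact B)
    (hA₀ : A.Nonempty) (hB₀ : B.Nonempty) : volume A + volume B ≤ volume (A + B) := by
  set a := sSup A
  set b := sInf B
  have hsub : (b +ᵥ A) ∪ (a +ᵥ B) ⊆ A + B := by
    refine union_subset ?_ ?_
    · rintro _ ⟨x, hx, rfl⟩
      exact ⟨x, hx, b, hB.sInf_mem hB₀, add_comm x b⟩
    · rintro _ ⟨y, hy, rfl⟩
      exact ⟨a, hA.sSup_mem hA₀, y, hy, rfl⟩
  -- the two translates lie on either side of `a + b`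
  have hinter : (b +ᵥ A) ∩ (a +ᵥ B) ⊆ {a + b} := by
    rintro _ ⟨⟨x, hx, rfl⟩, ⟨y, hy, hxy⟩⟩
    have hxa : x ≤ a := le_csSup hA.bddAbove hx
    have hby : b ≤ y := csInf_le hB.bddBelow hy
    simp only [vadd_eq_add, mem_singleton_iff] at hxy ⊢
    linarith
  calc volume A + volume B = volume (b +ᵥ A) + volume (a +ᵥ B) := by
        rw [measure_vadd, measure_vadd]
    _ = volume ((b +ᵥ A) ∪ (a +ᵥ B)) := by
        rw [← measure_union_add_inter _ (hB.vadd a).measurableSet,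
          measure_mono_null hinter (measure_singleton _), add_zero]
    _ ≤ volume (A + B) := measure_mono hsub

lemma volume_add_volume_le_of_add_subset {E F T : Set ℝ} (hE : MeasurableSet E)
    (hF : MeasurableSet F) (hE₀ : E.Nonempty) (hF₀ : F.Nonempty) (hT : E + F ⊆ T) :
    volume E + volume F ≤ volume T := by
  obtain ⟨x₀, hx₀⟩ := hE₀
  obtain ⟨y₀, hy₀⟩ := hF₀
  simp_rw [hE.measure_eq_iSup_isCompact, hF.measure_eq_iSup_isCompact, iSup_and']
  refine ENNReal.biSup_add_biSup_le' ⟨∅, empty_subset _, isCompact_empty⟩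
    ⟨∅, empty_subset _, isCompact_empty⟩ fun K ⟨hKE, hK⟩ L ⟨hLF, hL⟩ => ?_
  calc volume K + volume L ≤ volume (insert x₀ K) + volume (insert y₀ L) :=
        add_le_add (measure_mono (subset_insert _ _)) (measure_mono (subset_insert _ _))
    _ ≤ volume (insert x₀ K + insert y₀ L) :=
        volume_add_volume_le_volume_add (hK.insert _) (hL.insert _)
          (insert_nonempty _ _) (insert_nonempty _ _)
    _ ≤ volume T :=
        measure_mono ((add_subset_add (insert_subset hx₀ hKE) (insert_subset hy₀ hLF)).trans hT)

end Real

section LayerCake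

variable {α : Type*} [MeasurableSpace α] (μ : Measure α) {φ : α → ℝ≥0∞}

lemma antitone_measure_ofReal_lt (φ : α → ℝ≥0∞) :
    Antitone fun u : ℝ => μ {x | ENNReal.ofReal u < φ x} :=
  fun _ _ huv => measure_mono fun _ hx => (ENNReal.ofReal_le_ofReal huv).trans_lt hx

lemma lintegral_eq_setLIntegral_Ioi_measure_ofReal_lt (hφ : Measurable φ)
    (hφ_top : ∀ x, φ x ≠ ∞) :
    ∫⁻ x, φ x ∂μ = ∫⁻ u in Ioi (0 : ℝ), μ {x | ENNReal.ofReal u < φ x} := by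
  have hlt : ∀ u : ℝ, 0 < u → {x | ENNReal.ofReal u < φ x} = {x | u < (φ x).toReal} :=
    fun u hu => by
      ext x
      exact ENNReal.ofReal_lt_iff_lt_toReal hu.le (hφ_top x)
  rw [← lintegral_congr fun x => ENNReal.ofReal_toReal (hφ_top x),
    lintegral_eq_lintegral_meas_lt μ (ae_of_all _ fun _ => ENNReal.toReal_nonneg)
      hφ.ennreal_toReal.aemeasurable]
  exact setLIntegral_congr_fun measurableSet_Ioi fun u hu => by rw [hlt u hu]

lemma lintegral_eq_setLIntegral_Ioo_measure_ofReal_lt (hφ : Measurable φ)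
    (hφ₁ : ∀ x, φ x ≤ 1) :
    ∫⁻ x, φ x ∂μ = ∫⁻ u in Ioo (0 : ℝ) 1, μ {x | ENNReal.ofReal u < φ x} := by
  have hempty : ∀ u ∈ Ici (1 : ℝ), μ {x | ENNReal.ofReal u < φ x} = 0 := fun u hu =>
    measure_mono_null (fun x hx => (hφ₁ x).not_gt ((ENNReal.one_le_ofReal.2 hu).trans_lt hx))
      measure_empty
  rw [lintegral_eq_setLIntegral_Ioi_measure_ofReal_lt μ hφ
      fun x => ((hφ₁ x).trans_lt ENNReal.one_lt_top).ne, ← Ioo_union_Ici_eq_Ioi zero_lt_one,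
    lintegral_union measurableSet_Ici (disjoint_left.2 fun _ hu hu' => hu.2.not_ge hu'),
    setLIntegral_congr_fun measurableSet_Ici hempty, lintegral_zero, add_zero]

end LayerCake

section PrekopaLeindler

variable {t : ℝ} {f g h : ℝ → ℝ≥0∞}

lemma lintegral_rpow_mul_lintegral_rpow_le_of_iSup_eq_one (ht0 : 0 < t) (ht1 : t < 1)
    (hf : Measurable f) (hg : Measurable g) (hh : Measurable h)
    (hf₁ : ⨆ x, f x = 1) (hg₁ : ⨆ y, g y = 1) (hh_top : ∀ z, h z ≠ ∞)
    (hfgh : ∀ x y, f x ^ (1 - t) * g y ^ t ≤ h ((1 - t) * x + t * y)) :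
    (∫⁻ x, f x) ^ (1 - t) * (∫⁻ y, g y) ^ t ≤ ∫⁻ z, h z := by
  have ht1' : 0 < 1 - t := sub_pos.2 ht1
  let level (φ : ℝ → ℝ≥0∞) (u : ℝ) : Set ℝ := {x | ENNReal.ofReal u < φ x}
  have hlevel_ne : ∀ φ : ℝ → ℝ≥0∞, ⨆ x, φ x = 1 → ∀ u < 1, (level φ u).Nonempty :=
    fun φ hφ u hu =>
      let ⟨x, hx⟩ := lt_iSup_iff.1 (hφ ▸ ENNReal.ofReal_lt_one.2 hu)
      ⟨x, hx⟩
  -- the level sets of `h` contain the convex combinations of those of `f` and `g`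
  have hlevel : ∀ u ∈ Ioo (0 : ℝ) 1, ENNReal.ofReal (1 - t) * volume (level f u)
      + ENNReal.ofReal t * volume (level g u) ≤ volume (level h u) := by
    rintro u ⟨-, hu⟩
    rw [← Real.volume_smul_of_pos ht1', ← Real.volume_smul_of_pos ht0]
    refine Real.volume_add_volume_le_of_add_subset
      ((hf measurableSet_Ioi).const_smul₀ _) ((hg measurableSet_Ioi).const_smul₀ _)
      ((hlevel_ne f hf₁ u hu).smul_set) ((hlevel_ne g hg₁ u hu).smul_set) ?_
    rintro _ ⟨_, ⟨x, hx, rfl⟩, _, ⟨y, hy, rfl⟩, rfl⟩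
    calc ENNReal.ofReal u = ENNReal.ofReal u ^ (1 - t) * ENNReal.ofReal u ^ t :=
          (ENNReal.rpow_one_sub_mul_rpow_self _ ht0.le ht1.le).symm
      _ < f x ^ (1 - t) * g y ^ t :=
          ENNReal.mul_lt_mul (ENNReal.rpow_lt_rpow hx ht1') (ENNReal.rpow_lt_rpow hy ht0)
      _ ≤ h ((1 - t) * x + t * y) := hfgh x y
  calc (∫⁻ x, f x) ^ (1 - t) * (∫⁻ y, g y) ^ t
      ≤ ENNReal.ofReal (1 - t) * (∫⁻ x, f x) + ENNReal.ofReal t * ∫⁻ y, g y :=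
        ENNReal.geom_mean_le_arith_mean2_weighted ht0 ht1 _ _
    _ = ∫⁻ u in Ioo (0 : ℝ) 1, (ENNReal.ofReal (1 - t) * volume (level f u)
          + ENNReal.ofReal t * volume (level g u)) := by
        rw [lintegral_eq_setLIntegral_Ioo_measure_ofReal_lt volume hf (hf₁ ▸ le_iSup f),
          lintegral_eq_setLIntegral_Ioo_measure_ofReal_lt volume hg (hg₁ ▸ le_iSup g),
          lintegral_add_left ((antitone_measure_ofReal_lt volume f).measurable.const_mul _),
          lintegral_const_mul _ (antitone_measure_ofReal_lt volume f).measurable,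
          lintegral_const_mul _ (antitone_measure_ofReal_lt volume g).measurable]
    _ ≤ ∫⁻ u in Ioo (0 : ℝ) 1, volume (level h u) :=
        setLIntegral_mono' measurableSet_Ioo hlevel
    _ ≤ ∫⁻ u in Ioi (0 : ℝ), volume (level h u) := lintegral_mono_set Ioo_subset_Ioi_self
    _ = ∫⁻ z, h z := (lintegral_eq_setLIntegral_Ioi_measure_ofReal_lt volume hh hh_top).symm

/-- The one-dimensional Prékopa–Leindler inequality. -/
lemma lintegral_rpow_mul_lintegral_rpow_le (ht0 : 0 < t) (ht1 : t < 1)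
    (hf : Measurable f) (hg : Measurable g) (hh : Measurable h)
    (hf_top : ⨆ x, f x ≠ ∞) (hg_top : ⨆ y, g y ≠ ∞) (hh_top : ∀ z, h z ≠ ∞)
    (hfgh : ∀ x y, f x ^ (1 - t) * g y ^ t ≤ h ((1 - t) * x + t * y)) :
    (∫⁻ x, f x) ^ (1 - t) * (∫⁻ y, g y) ^ t ≤ ∫⁻ z, h z := by
  rcases eq_or_ne (⨆ x, f x) 0 with hf0 | hf0
  · simp [ENNReal.iSup_eq_zero.1 hf0, ENNReal.zero_rpow_of_pos (sub_pos.2 ht1)]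
  rcases eq_or_ne (⨆ y, g y) 0 with hg0 | hg0
  · simp [ENNReal.iSup_eq_zero.1 hg0, ENNReal.zero_rpow_of_pos ht0]
  -- rescale `f` and `g` to supremum `1`; the hypothesis is homogeneous
  set a := (⨆ x, f x)⁻¹
  set b := (⨆ y, g y)⁻¹
  have hc0 : a ^ (1 - t) * b ^ t ≠ 0 := by
    simp [a, b, ENNReal.rpow_eq_zero_iff, hf_top, hg_top, not_lt.2 ht1.le, ht0.not_gt]
  have hctop : a ^ (1 - t) * b ^ t ≠ ∞ :=
    ENNReal.mul_ne_top (ENNReal.rpow_ne_top_of_nonneg (sub_nonneg.2 ht1.le)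
      (ENNReal.inv_ne_top.2 hf0)) (ENNReal.rpow_ne_top_of_nonneg ht0.le (ENNReal.inv_ne_top.2 hg0))
  have key := lintegral_rpow_mul_lintegral_rpow_le_of_iSup_eq_one (f := fun x => a * f x)
    (g := fun y => b * g y) (h := fun z => a ^ (1 - t) * b ^ t * h z) ht0 ht1
    (hf.const_mul _) (hg.const_mul _) (hh.const_mul _)
    (by rw [← ENNReal.mul_iSup, ENNReal.inv_mul_cancel hf0 hf_top])
    (by rw [← ENNReal.mul_iSup, ENNReal.inv_mul_cancel hg0 hg_top])
    (fun z => ENNReal.mul_ne_top hctop (hh_top z))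
    (fun x y => by
      rw [ENNReal.mul_rpow_one_sub_mul_mul_rpow _ _ _ _ ht0.le ht1.le]
      exact mul_le_mul' le_rfl (hfgh x y))
  rwa [lintegral_const_mul _ hf, lintegral_const_mul _ hg, lintegral_const_mul _ hh,
    ENNReal.mul_rpow_one_sub_mul_mul_rpow _ _ _ _ ht0.le ht1.le,
    ENNReal.mul_le_mul_iff_right hc0 hctop] at key

end PrekopaLeindler

section BrunnMinkowski

variable {E F : Type*} [NormedAddCommGroup E] [NormedSpace ℝ E] [MeasurableSpace E]

def SatisfiesBrunnMinkowski (μ : Measure E) : Prop :=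
  ∀ ⦃t : ℝ⦄, 0 < t → t < 1 → ∀ ⦃A B : Set E⦄, IsCompact A → IsCompact B →
    μ A ^ (1 - t) * μ B ^ t ≤ μ ((1 - t) • A + t • B)

lemma satisfiesBrunnMinkowski_of_subsingleton [Subsingleton E] (μ : Measure E) :
    SatisfiesBrunnMinkowski μ := by
  intro t ht0 ht1 A B _ _
  rcases A.eq_empty_or_nonempty with rfl | hA
  · simp [ENNReal.zero_rpow_of_pos (sub_pos.2 ht1)]
  rcases B.eq_empty_or_nonempty with rfl | hB
  · simp [ENNReal.zero_rpow_of_pos ht0]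
  rw [(hA.smul_set.add hB.smul_set).eq_univ, hA.eq_univ, hB.eq_univ,
    ENNReal.rpow_one_sub_mul_rpow_self _ ht0.le ht1.le]

lemma SatisfiesBrunnMinkowski.smul {μ : Measure E} (hμ : SatisfiesBrunnMinkowski μ)
    (c : ℝ≥0∞) : SatisfiesBrunnMinkowski (c • μ) := by
  intro t ht0 ht1 A B hA hB
  simp only [Measure.smul_apply, smul_eq_mul]
  rw [ENNReal.mul_rpow_one_sub_mul_mul_rpow _ _ _ _ ht0.le ht1.le,
    ENNReal.rpow_one_sub_mul_rpow_self _ ht0.le ht1.le]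
  exact mul_le_mul' le_rfl (hμ ht0 ht1 hA hB)

variable [BorelSpace E] [NormedAddCommGroup F] [NormedSpace ℝ F] [MeasurableSpace F]
  [BorelSpace F]

namespace SatisfiesBrunnMinkowski

variable {μ : Measure E}

lemma map (hμ : SatisfiesBrunnMinkowski μ) (L : E ≃L[ℝ] F) :
    SatisfiesBrunnMinkowski (μ.map L) := by
  intro t ht0 ht1 A B hA hB
  have hmap : ∀ X : Set F, IsCompact X → μ.map L X = μ (L.symm '' X) := fun X hX => by
    rw [Measure.map_apply L.continuous.measurable hX.measurableSet, L.image_symm_eq_preimage]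
  rw [hmap A hA, hmap B hB, hmap _ ((hA.smul _).add (hB.smul _)), Set.image_add,
    image_smul_set, image_smul_set]
  exact hμ ht0 ht1 (hA.image L.symm.continuous) (hB.image L.symm.continuous)

/-- Prékopa–Leindler applied to the measures of the slices `{a} × E`. -/
lemma prod [SecondCountableTopology E] [SFinite μ] [IsFiniteMeasureOnCompacts μ]
    (hμ : SatisfiesBrunnMinkowski μ) :
    SatisfiesBrunnMinkowski ((volume : Measure ℝ).prod μ) := by
  intro t ht0 ht1 A B hA hB
  have hC : IsCompact ((1 - t) • A + t • B) := (hA.smul _).add (hB.smul _)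
  have hslice : ∀ X : Set (ℝ × E), IsCompact X → ∀ a : ℝ, IsCompact (Prod.mk a ⁻¹' X) :=
    fun X hX a => (hX.image continuous_snd).of_isClosed_subset
      (hX.isClosed.preimage (Continuous.prodMk_right a)) fun y hy => ⟨(a, y), hy, rfl⟩
  have hslice_top : ∀ X : Set (ℝ × E), IsCompact X → ⨆ a, μ (Prod.mk a ⁻¹' X) ≠ ∞ :=
    fun X hX => ne_top_of_le_ne_top (hX.image continuous_snd).measure_lt_top.ne
      (iSup_le fun a => measure_mono fun y hy => ⟨(a, y), hy, rfl⟩)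
  rw [Measure.prod_apply hA.measurableSet, Measure.prod_apply hB.measurableSet,
    Measure.prod_apply hC.measurableSet]
  refine lintegral_rpow_mul_lintegral_rpow_le ht0 ht1
    (measurable_measure_prodMk_left hA.measurableSet)
    (measurable_measure_prodMk_left hB.measurableSet)
    (measurable_measure_prodMk_left hC.measurableSet) (hslice_top A hA) (hslice_top B hB)
    (fun z => ne_top_of_le_ne_top (hslice_top _ hC)
      (le_iSup (fun a => μ (Prod.mk a ⁻¹' _)) z))
    fun x y => (hμ ht0 ht1 (hslice A hA x) (hslice B hB y)).trans (measure_mono ?_)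
  rintro _ ⟨_, ⟨p, hp, rfl⟩, _, ⟨q, hq, rfl⟩, rfl⟩
  exact ⟨_, smul_mem_smul_set hp, _, smul_mem_smul_set hq, by simp⟩

end SatisfiesBrunnMinkowski

lemma satisfiesBrunnMinkowski_volume_pi (k : ℕ) :
    SatisfiesBrunnMinkowski (volume : Measure (Fin k → ℝ)) := by
  induction k with
  | zero => exact satisfiesBrunnMinkowski_of_subsingleton _
  | succ k ih =>
    have hvol : (volume : Measure (Fin (k + 1) → ℝ)) =
        ((volume : Measure ℝ).prod volume).map
          (Fin.consLinearEquiv ℝ fun _ => ℝ).toContinuousLinearEquiv := by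
      rw [← (volume_preserving_piFinSuccAbove (fun _ => ℝ) 0).symm.map_eq]
      congr 1
      funext p
      exact Fin.insertNth_zero' p.1 p.2
    rw [hvol]
    exact ih.prod.map _

lemma satisfiesBrunnMinkowski_of_isAddHaarMeasure [FiniteDimensional ℝ E] (μ : Measure E)
    [μ.IsAddHaarMeasure] : SatisfiesBrunnMinkowski μ := by
  let L : E ≃L[ℝ] (Fin (finrank ℝ E) → ℝ) := ContinuousLinearEquiv.ofFinrankEq (by simp)
  have hμ : μ = (μ.map L).map L.symm := by
    rw [Measure.map_map L.symm.continuous.measurable L.continuous.measurable,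
      L.symm_comp_self, Measure.map_id]
  rw [hμ, Measure.isAddLeftInvariant_eq_smul (μ.map L) volume]
  exact ((satisfiesBrunnMinkowski_volume_pi _).smul _).map _

end BrunnMinkowski

section Slices

variable {E : Type*} [NormedAddCommGroup E] [NormedSpace ℝ E] (S : Submodule ℝ E) {K : Set E}

lemma IsCompact.setOf_vadd_mem_submodule [FiniteDimensional ℝ S] (hK : IsCompact K) (v : E) :
    IsCompact {s : S | v + s ∈ K} :=
  ((isometry_add_left v).comp isometry_subtype_coe).isClosedEmbedding.isCompact_preimage hK

variable [MeasurableSpace E] [BorelSpace E]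

lemma hausdorffMeasure_inter_vadd_submodule (K : Set E) (v : E) :
    μH[finrank ℝ S] (K ∩ (v +ᵥ (S : Set E))) = μH[finrank ℝ S] {s : S | v + s ∈ K} := by
  have hiso : Isometry fun s : S => v + (s : E) :=
    (isometry_add_left v).comp isometry_subtype_coe
  rw [← hiso.hausdorffMeasure_image (Or.inl (Nat.cast_nonneg _))]
  congr 1
  ext x
  constructor
  · rintro ⟨hxK, s, hs, rfl⟩
    exact ⟨⟨s, hs⟩, hxK, rfl⟩
  · rintro ⟨s, hs, rfl⟩
    exact ⟨hs, s, s.2, rfl⟩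

lemma Convex.hausdorffMeasure_inter_vadd_rpow_mul_rpow_le [FiniteDimensional ℝ S]
    (hKconv : Convex ℝ K) (hK : IsCompact K) {t : ℝ} (ht0 : 0 < t) (ht1 : t < 1) (v w : E) :
    μH[finrank ℝ S] (K ∩ (v +ᵥ (S : Set E))) ^ (1 - t)
        * μH[finrank ℝ S] (K ∩ (w +ᵥ (S : Set E))) ^ t
      ≤ μH[finrank ℝ S] (K ∩ (((1 - t) • v + t • w) +ᵥ (S : Set E))) := by
  simp only [hausdorffMeasure_inter_vadd_submodule]
  refine (satisfiesBrunnMinkowski_of_isAddHaarMeasure _ ht0 ht1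
    (hK.setOf_vadd_mem_submodule S v) (hK.setOf_vadd_mem_submodule S w)).trans (measure_mono ?_)
  rintro _ ⟨_, ⟨x, hx, rfl⟩, _, ⟨y, hy, rfl⟩, rfl⟩
  have := hKconv hx hy (sub_nonneg.2 ht1.le) ht0.le (sub_add_cancel 1 t)
  simp only [mem_ofPred_eq, Submodule.coe_add, Submodule.coe_smul]
  convert this using 1
  module

end Slices

lemma norm_div_inv_add_inv_smul_normalize_add {E : Type*} [NormedAddCommGroup E]
    [NormedSpace ℝ E] {x y : E} (hxy : x + y ≠ 0) {r₁ r₂ : ℝ} (hr1 : 0 < r₁) (hr2 : 0 < r₂) :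
    (‖x + y‖ / (1/r₁ + 1/r₂)) • (‖x + y‖⁻¹ • (x + y))
      = (1 - r₁/(r₁+r₂)) • (r₁ • x) + (r₁/(r₁+r₂)) • (r₂ • y) := by
  have hnorm : ‖x + y‖ ≠ 0 := norm_ne_zero_iff.2 hxy
  have h₁ : (1 - r₁/(r₁+r₂)) * r₁ = r₁ * r₂ / (r₁ + r₂) := by
    field_simp
    ring
  have h₂ : r₁/(r₁+r₂) * r₂ = r₁ * r₂ / (r₁ + r₂) := by
    field_simp
  have h₃ : ‖x + y‖ / (1/r₁ + 1/r₂) * ‖x + y‖⁻¹ = r₁ * r₂ / (r₁ + r₂) := by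
    field_simp
    ring
  rw [smul_smul, smul_smul, smul_smul, h₁, h₂, h₃, smul_add]

theorem stmt15_general (m : ℕ) (K : Set (EuclideanSpace ℝ (Fin m)))
    (hKc : IsCompact K) (hKconv : Convex ℝ K)
    (S : Submodule ℝ (EuclideanSpace ℝ (Fin m))) (d : ℕ) (hd : d = Module.finrank ℝ S)
    (θ₁ θ₂ : EuclideanSpace ℝ (Fin m))
    (hsum : θ₁ + θ₂ ≠ 0)
    (r₁ r₂ : ℝ) (hr1 : 0 < r₁) (hr2 : 0 < r₂) :
    (μH[(d:ℝ)] (K ∩ ((r₁ • θ₁) +ᵥ (S : Set (EuclideanSpace ℝ (Fin m)))))).toReal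
        ^ (1 - r₁/(r₁+r₂))
      * (μH[(d:ℝ)] (K ∩ ((r₂ • θ₂) +ᵥ (S : Set (EuclideanSpace ℝ (Fin m)))))).toReal
        ^ (r₁/(r₁+r₂))
      ≤ (μH[(d:ℝ)] (K ∩ (((‖θ₁ + θ₂‖ / (1/r₁ + 1/r₂)) • (‖θ₁ + θ₂‖⁻¹ • (θ₁ + θ₂)))
          +ᵥ (S : Set (EuclideanSpace ℝ (Fin m)))))).toReal := by
  subst hd
  have ht0 : 0 < r₁/(r₁+r₂) := by positivity
  have ht1 : r₁/(r₁+r₂) < 1 := (div_lt_one (by positivity)).2 (lt_add_of_pos_right r₁ hr2)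
  rw [norm_div_inv_add_inv_smul_normalize_add hsum hr1 hr2, ENNReal.toReal_rpow,
    ENNReal.toReal_rpow, ← ENNReal.toReal_mul]
  refine ENNReal.toReal_mono ?_
    (hKconv.hausdorffMeasure_inter_vadd_rpow_mul_rpow_le S hKc ht0 ht1 _ _)
  rw [hausdorffMeasure_inter_vadd_submodule]
  exact (hKc.setOf_vadd_mem_submodule S _).measure_lt_top.ne

/-- Log-concavity of parallel slices of a convex body (Brunn–Minkowski):
`h₃(r₃) ≥ h₁(r₁)^{1−t} h₂(r₂)^t`. -/
theorem stmt15 (m : ℕ) (K : Set (EuclideanSpace ℝ (Fin m)))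
    (hKc : IsCompact K) (hKconv : Convex ℝ K) (hKint : (interior K).Nonempty)
    (S : Submodule ℝ (EuclideanSpace ℝ (Fin m))) (d : ℕ) (hd : d = Module.finrank ℝ S)
    (θ₁ θ₂ : EuclideanSpace ℝ (Fin m)) (h1 : ‖θ₁‖ = 1) (h2 : ‖θ₂‖ = 1)
    (ho1 : ∀ s ∈ S, (inner ℝ θ₁ s : ℝ) = 0) (ho2 : ∀ s ∈ S, (inner ℝ θ₂ s : ℝ) = 0)
    (hsum : θ₁ + θ₂ ≠ 0)
    (r₁ r₂ : ℝ) (hr1 : 0 < r₁) (hr2 : 0 < r₂) :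
    (μH[(d:ℝ)] (K ∩ ((r₁ • θ₁) +ᵥ (S : Set (EuclideanSpace ℝ (Fin m)))))).toReal
        ^ (1 - r₁/(r₁+r₂))
      * (μH[(d:ℝ)] (K ∩ ((r₂ • θ₂) +ᵥ (S : Set (EuclideanSpace ℝ (Fin m)))))).toReal
        ^ (r₁/(r₁+r₂))
      ≤ (μH[(d:ℝ)] (K ∩ (((‖θ₁ + θ₂‖ / (1/r₁ + 1/r₂)) • (‖θ₁ + θ₂‖⁻¹ • (θ₁ + θ₂)))
          +ᵥ (S : Set (EuclideanSpace ℝ (Fin m)))))).toReal :=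
  stmt15_general m K hKc hKconv S d hd θ₁ θ₂ hsum r₁ r₂ hr1 hr2
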